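/- Suppose P is a stochastically transitive distribution on S_n and C = (C_1,...,C_K) is a bucket order agreeing with Kemeny consensus, i.e., i ≺_C j implies p_{j,i} ≤ 1/2. Then L*_P = L*_{P_C} + Λ_P(C), where L*_Q = Σ_{i<j} min(q_{i,j}, 1 − q_{i,j}) for a stochastically transitive distribution Q with pairwise marginals q_{i,j}, P_C is the bucket distribution having the same intra-bucket pairwise marginals as P and q_{j,i} = 0 for i ≺_C j, and Λ_P(C) = Σ_{i ≺_C j} p_{j,i}. -/

import Mathlib

open Finset
open scoped Classical

/-!
The identity holds pair by pair. Summing `Λ_P(C)` over unordered pairs `{i, j}`, a pair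
contributes `p_{j,i}` if `i ≺_C j`, `p_{i,j}` if `j ≺_C i`, and nothing within a bucket.
Within a bucket `q = p`, so both sides agree. Across buckets `q ∈ {0, 1}`, so
`min(q, 1 - q) = 0`, while agreement with the Kemeny consensus makes the crossing
marginal `p_{j,i}` (for `i ≺_C j`) the smaller of `p_{i,j}, p_{j,i} = 1 - p_{i,j}`.
-/

/-- Pairwise marginal `p_{i,j} = P(σ(i) < σ(j))`. -/
def pairwiseMarginal {n : ℕ} (P : Equiv.Perm (Fin n) → ℝ) (i j : Fin n) : ℝ :=
  ∑ σ : Equiv.Perm (Fin n), if σ i < σ j then P σ else 0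

theorem Finset.sum_eq_sum_filter_lt_add_swap {α M : Type*} [Fintype α] [LinearOrder α]
    [AddCommMonoid M] (f : α × α → M) (hdiag : ∀ a, f (a, a) = 0) :
    ∑ p, f p = ∑ p ∈ univ.filter (fun p : α × α => p.1 < p.2), (f p + f p.swap) := by
  have hgt : ∑ p ∈ univ.filter (fun p : α × α => ¬p.1 < p.2), f p =
      ∑ p ∈ univ.filter (fun p : α × α => p.1 < p.2), f p.swap := by
    rw [← sum_filter_add_sum_filter_not _ (fun p : α × α => p.1 = p.2),
      sum_eq_zero fun ⟨a, a'⟩ hp => by obtain rfl : a = a' := (mem_filter.1 hp).2; exact hdiag a,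
      zero_add]
    refine sum_nbij' Prod.swap Prod.swap ?_ ?_ (fun _ _ => rfl) (fun _ _ => rfl)
      (fun _ _ => rfl) <;> intro p hp <;> simp only [mem_filter, mem_univ, true_and,
        Prod.fst_swap, Prod.snd_swap] at hp ⊢
    · exact lt_of_le_of_ne (not_lt.1 hp.1) (Ne.symm hp.2)
    · exact ⟨hp.not_gt, hp.ne'⟩
  rw [← sum_filter_add_sum_filter_not univ (fun p : α × α => p.1 < p.2), hgt,
    sum_add_distrib]

theorem pairwiseMarginal_add_swap {n : ℕ} {P : Equiv.Perm (Fin n) → ℝ}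
    (hP1 : ∑ σ, P σ = 1) {i j : Fin n} (hij : i ≠ j) :
    pairwiseMarginal P i j + pairwiseMarginal P j i = 1 := by
  rw [pairwiseMarginal, pairwiseMarginal, ← sum_add_distrib, ← hP1]
  refine sum_congr rfl fun σ _ => ?_
  rcases (σ.injective.ne hij).lt_or_gt with h | h <;> simp [h, h.not_gt]

section BucketOrder

variable {n K : ℕ} {P : Equiv.Perm (Fin n) → ℝ} {b : Fin n → Fin K} {q : Fin n → Fin n → ℝ}

theorem min_pairwiseMarginal_eq_min_bucket_add_crossing (hP1 : ∑ σ, P σ = 1)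
    (hagree : ∀ i j, b i < b j → pairwiseMarginal P j i ≤ 1 / 2)
    (hq : ∀ i j, q i j = if b i = b j then pairwiseMarginal P i j
      else if b i < b j then 1 else 0) {i j : Fin n} (hij : i ≠ j) :
    min (pairwiseMarginal P i j) (1 - pairwiseMarginal P i j) =
      min (q i j) (1 - q i j) +
        ((if b i < b j then pairwiseMarginal P j i else 0) +
          if b j < b i then pairwiseMarginal P i j else 0) := by
  have hsum := pairwiseMarginal_add_swap hP1 hij
  rw [hq]
  rcases lt_trichotomy (b i) (b j) with hb | hb | hb
  · have := hagree i j hb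
    simp only [hb.ne, hb, hb.not_gt, if_true, if_false]
    rw [min_eq_right (by linarith)]
    norm_num
    linarith
  · simp [hb]
  · have := hagree j i hb
    simp only [hb.ne', hb, hb.not_gt, if_true, if_false]
    rw [min_eq_left (by linarith)]
    norm_num

end BucketOrder

theorem dispersion_decomposition {n K : ℕ} (P : Equiv.Perm (Fin n) → ℝ)
    (hP1 : ∑ σ : Equiv.Perm (Fin n), P σ = 1)
    (b : Fin n → Fin K)
    (hagree : ∀ i j : Fin n, b i < b j → pairwiseMarginal P j i ≤ 1 / 2)
    (q : Fin n → Fin n → ℝ)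
    (hq : ∀ i j : Fin n, q i j =
      if b i = b j then pairwiseMarginal P i j
      else if b i < b j then 1 else 0) :
    ∑ p ∈ Finset.univ.filter (fun p : Fin n × Fin n => p.1 < p.2),
        min (pairwiseMarginal P p.1 p.2) (1 - pairwiseMarginal P p.1 p.2) =
      (∑ p ∈ Finset.univ.filter (fun p : Fin n × Fin n => p.1 < p.2),
        min (q p.1 p.2) (1 - q p.1 p.2)) +
      ∑ p ∈ Finset.univ.filter (fun p : Fin n × Fin n => b p.1 < b p.2),
        pairwiseMarginal P p.2 p.1 := by
  rw [sum_filter (fun p : Fin n × Fin n => b p.1 < b p.2),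
    sum_eq_sum_filter_lt_add_swap _ (by simp), ← sum_add_distrib]
  exact sum_congr rfl fun p hp =>
    min_pairwiseMarginal_eq_min_bucket_add_crossing hP1 hagree hq (mem_filter.1 hp).2.ne
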